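/- There exists a universal constant c ≥ 1 with the following property. Let d ≥ 3, L₀ ≥ 1, l₀ ≥ 1 and n ≥ 0 be integers, set L_k = l₀^k·L₀ for 0 ≤ k ≤ n, and let x ∈ L_n·ℤ^d. Then the number of proper embeddings of T_n in ℤ^d with root at x is at most (c·l₀)^{2(d-1)·2^n}. -/

import Mathlib

/-- The `ℓ^∞`-norm of a point of `ℤ^d`. -/
def normInf {d : ℕ} (x : Fin d → ℤ) : ℕ := Finset.univ.sup fun i => (x i).natAbs

/-- `T` is a proper embedding of the dyadic tree `T_n` (finite sequences in `{1,2}` of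
length at most `n`) in `ℤ^d` with root at `x ∈ L_n·ℤ^d`, for the scales `L_k = l₀^k L₀`:
the root is mapped to `x`, and the two descendants of a vertex `m` of generation `k < n`
are mapped into `L_{n-k-1}·ℤ^d ∩ S_∞(T(m), L_{n-k})` and
`L_{n-k-1}·ℤ^d ∩ S_∞(T(m), 2 L_{n-k})`, respectively. -/
def IsProperEmbedding (d L₀ l₀ n : ℕ) (x : Fin d → ℤ)
    (T : {m : List (Fin 2) // m.length ≤ n} → (Fin d → ℤ)) : Prop :=
  T ⟨[], Nat.zero_le n⟩ = x ∧
  ∀ (m : List (Fin 2)) (hm : m.length < n),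
    ((∀ i, ((l₀ ^ (n - m.length - 1) * L₀ : ℕ) : ℤ) ∣
        T ⟨m ++ [0], by simpa using hm⟩ i) ∧
      normInf (T ⟨m ++ [0], by simpa using hm⟩ - T ⟨m, hm.le⟩) =
        l₀ ^ (n - m.length) * L₀) ∧
    ((∀ i, ((l₀ ^ (n - m.length - 1) * L₀ : ℕ) : ℤ) ∣
        T ⟨m ++ [1], by simpa using hm⟩ i) ∧
      normInf (T ⟨m ++ [1], by simpa using hm⟩ - T ⟨m, hm.le⟩) =
        2 * (l₀ ^ (n - m.length) * L₀))

/-!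
A proper embedding is determined by its root and by its `2 (2^n - 1)` increments
`T(m j) - T(m)`. The increment along an edge leaving generation `k` lies in
`L_{n-k-1} ℤ^d` at sup-distance `L_{n-k}` or `2 L_{n-k}` from the origin, so after division
by `L_{n-k-1}` it lies on the sup-sphere of radius `l₀` or `2 l₀`. A sup-sphere of radius `t`
in `ℤ^d` has at most `2d (2t+1)^{d-1}` points: choose a coordinate and a sign where the
maximum `±t` is attained, the other coordinates range over `[-t, t]`. Hence there are at most
`(2d (4l₀+1)^{d-1})^{2·2^n} ≤ (20 l₀)^{2(d-1) 2^n}` proper embeddings.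
-/

open Finset

lemma natAbs_le_normInf {d : ℕ} (w : Fin d → ℤ) (i : Fin d) : (w i).natAbs ≤ normInf w :=
  le_sup (f := fun i => (w i).natAbs) (mem_univ i)

lemma exists_natAbs_eq_normInf {e : ℕ} (w : Fin (e + 1) → ℤ) :
    ∃ i, (w i).natAbs = normInf w := by
  obtain ⟨i, -, hi⟩ := exists_mem_eq_sup univ univ_nonempty fun i => (w i).natAbs
  exact ⟨i, hi.symm⟩

lemma normInf_const_mul {d : ℕ} (s : ℕ) (w : Fin d → ℤ) :
    normInf (fun i => (s : ℤ) * w i) = s * normInf w := by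
  rw [normInf, normInf, apply_sup_eq_sup_comp_of_linearOrder (s * ·)
    (fun _ _ h => Nat.mul_le_mul_left s h) (mul_zero s)]
  simp [Function.comp_def, Int.natAbs_mul]

lemma setOf_normInf_eq_subset_image_insertNth (e t : ℕ) :
    {w : Fin (e + 1) → ℤ | normInf w = t} ⊆
      (univ ×ˢ (({(t : ℤ), -(t : ℤ)} : Finset ℤ) ×ˢ
        Fintype.piFinset fun _ : Fin e => Icc (-(t : ℤ)) t)).image
        fun p => Fin.insertNth (α := fun _ => ℤ) p.1 p.2.1 p.2.2 := by
  intro w (hw : normInf w = t)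
  obtain ⟨i, hi⟩ := exists_natAbs_eq_normInf w
  refine mem_image.2 ⟨(i, w i, Fin.removeNth i w), ?_, Fin.insertNth_self_removeNth i w⟩
  have hle : ∀ j, (w j).natAbs ≤ t := hw ▸ natAbs_le_normInf w
  simp only [mem_product, mem_univ, mem_insert, mem_singleton, Fintype.mem_piFinset, mem_Icc,
    Fin.removeNth, true_and]
  refine ⟨by omega, fun j => ?_⟩
  have := hle (i.succAbove j)
  omega

lemma finite_setOf_normInf_eq (e t : ℕ) : {w : Fin (e + 1) → ℤ | normInf w = t}.Finite :=
  (finite_toSet _).subset (setOf_normInf_eq_subset_image_insertNth e t)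

lemma ncard_setOf_normInf_eq_le (e t : ℕ) :
    {w : Fin (e + 1) → ℤ | normInf w = t}.ncard ≤ 2 * (e + 1) * (2 * t + 1) ^ e := by
  refine (Set.ncard_le_ncard (setOf_normInf_eq_subset_image_insertNth e t)
    (finite_toSet _)).trans ?_
  rw [Set.ncard_coe_finset]
  refine card_image_le.trans ?_
  rw [card_product, card_product, card_univ, Fintype.card_fin, Fintype.card_piFinset]
  simp only [Int.card_Icc, prod_const, card_univ, Fintype.card_fin]
  rw [show (t + 1 - -t : ℤ).toNat = 2 * t + 1 by omega, mul_comm 2 (e + 1), mul_assoc]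
  gcongr
  exact card_le_two

def latticeSphere (d s t : ℕ) : Set (Fin d → ℤ) :=
  {v | (∀ i, (s : ℤ) ∣ v i) ∧ normInf v = s * t}

lemma latticeSphere_subset_image {d s : ℕ} (hs : s ≠ 0) (t : ℕ) :
    latticeSphere d s t ⊆ (fun w i => (s : ℤ) * w i) '' {w | normInf w = t} := by
  rintro v ⟨hdvd, hv⟩
  have hv_eq : (fun i => (s : ℤ) * (v i / s)) = v := funext fun i => Int.mul_ediv_cancel' (hdvd i)
  refine ⟨fun i => v i / s, ?_, hv_eq⟩
  have := normInf_const_mul s fun i => v i / s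
  rw [hv_eq, hv] at this
  exact (Nat.eq_of_mul_eq_mul_left (Nat.pos_of_ne_zero hs) this).symm

lemma finite_latticeSphere (e : ℕ) {s : ℕ} (hs : s ≠ 0) (t : ℕ) :
    (latticeSphere (e + 1) s t).Finite :=
  ((finite_setOf_normInf_eq e t).image _).subset (latticeSphere_subset_image hs t)

lemma ncard_latticeSphere_le (e : ℕ) {s : ℕ} (hs : s ≠ 0) (t : ℕ) :
    (latticeSphere (e + 1) s t).ncard ≤ 2 * (e + 1) * (2 * t + 1) ^ e :=
  calc _ ≤ ((fun w i => (s : ℤ) * w i) '' {w : Fin (e + 1) → ℤ | normInf w = t}).ncard :=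
        Set.ncard_le_ncard (latticeSphere_subset_image hs t)
          ((finite_setOf_normInf_eq e t).image _)
    _ ≤ {w : Fin (e + 1) → ℤ | normInf w = t}.ncard :=
        Set.ncard_image_le (finite_setOf_normInf_eq e t)
    _ ≤ 2 * (e + 1) * (2 * t + 1) ^ e := ncard_setOf_normInf_eq_le e t

def listsLengthLtEquivSigmaVector (α : Type*) (n : ℕ) :
    {l : List α // l.length < n} ≃ Σ k : Fin n, List.Vector α k where
  toFun l := ⟨⟨l.1.length, l.2⟩, ⟨l.1, rfl⟩⟩
  invFun v := ⟨v.2.1, v.2.2.trans_lt v.1.2⟩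
  left_inv _ := rfl
  right_inv := by
    rintro ⟨⟨k, hk⟩, l, hl⟩
    obtain rfl : l.length = k := hl
    rfl

lemma card_lists_length_lt_add_one (n : ℕ) :
    Nat.card {l : List (Fin 2) // l.length < n} + 1 = 2 ^ n := by
  rw [Nat.card_congr (listsLengthLtEquivSigmaVector (Fin 2) n), Nat.card_sigma]
  simp only [Nat.card_eq_fintype_card, card_vector, Fintype.card_fin]
  rw [Fin.sum_univ_eq_sum_range (2 ^ ·)]
  simpa using geom_sum_mul_add (1 : ℕ) n

lemma eq_of_apply_nil_eq_of_sub_eq {G : Type*} [AddGroup G] {n : ℕ}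
    {T T' : {m : List (Fin 2) // m.length ≤ n} → G}
    (h_nil : T ⟨[], Nat.zero_le n⟩ = T' ⟨[], Nat.zero_le n⟩)
    (h_sub : ∀ (m : List (Fin 2)) (hm : m.length < n) (j : Fin 2),
      T ⟨m ++ [j], by simpa using hm⟩ - T ⟨m, hm.le⟩ =
        T' ⟨m ++ [j], by simpa using hm⟩ - T' ⟨m, hm.le⟩) :
    T = T' := by
  funext ⟨m, hm⟩
  induction m using List.reverseRecOn with
  | nil => exact h_nil
  | append_singleton m j ih =>
    have hm' : m.length < n := by simpa using hm
    have := h_sub m hm' j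
    rwa [ih hm'.le, sub_left_inj] at this

namespace IsProperEmbedding

variable {d L₀ l₀ n : ℕ} {x : Fin d → ℤ} {T : {m : List (Fin 2) // m.length ≤ n} → (Fin d → ℤ)}

lemma dvd_apply (hT : IsProperEmbedding d L₀ l₀ n x T)
    (hx : ∀ i, ((l₀ ^ n * L₀ : ℕ) : ℤ) ∣ x i) (m : List (Fin 2)) (hm : m.length ≤ n) (i : Fin d) :
    ((l₀ ^ (n - m.length) * L₀ : ℕ) : ℤ) ∣ T ⟨m, hm⟩ i := by
  rcases m.eq_nil_or_concat' with rfl | ⟨m, j, rfl⟩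
  · simpa [hT.1] using hx i
  · have hm' : m.length < n := by simpa using hm
    rw [show n - (m ++ [j]).length = n - m.length - 1 by
      rw [List.length_append, List.length_singleton, Nat.sub_add_eq]]
    match j with
    | 0 => exact (hT.2 m hm').1.1 i
    | 1 => exact (hT.2 m hm').2.1 i

lemma sub_mem_latticeSphere (hT : IsProperEmbedding d L₀ l₀ n x T)
    (hx : ∀ i, ((l₀ ^ n * L₀ : ℕ) : ℤ) ∣ x i) (m : List (Fin 2)) (hm : m.length < n)
    (j : Fin 2) :
    T ⟨m ++ [j], by simpa using hm⟩ - T ⟨m, hm.le⟩ ∈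
      latticeSphere d (l₀ ^ (n - m.length - 1) * L₀) ((j + 1) * l₀) := by
  have h_scale : l₀ ^ (n - m.length) * L₀ = l₀ ^ (n - m.length - 1) * L₀ * l₀ := by
    rw [mul_right_comm, ← pow_succ, Nat.sub_one_add_one (by omega)]
  have h_parent : ∀ i, ((l₀ ^ (n - m.length - 1) * L₀ : ℕ) : ℤ) ∣ T ⟨m, hm.le⟩ i := fun i =>
    (Int.natCast_dvd_natCast.2 (h_scale ▸ dvd_mul_right _ _)).trans (hT.dvd_apply hx m hm.le i)
  have h_step := hT.2 m hm
  match j with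
  | 0 => exact ⟨fun i => dvd_sub (h_step.1.1 i) (h_parent i),
      h_step.1.2.trans (by rw [h_scale, Fin.val_zero]; ring)⟩
  | 1 => exact ⟨fun i => dvd_sub (h_step.2.1 i) (h_parent i),
      h_step.2.2.trans (by rw [h_scale, Fin.val_one]; ring)⟩

end IsProperEmbedding

theorem IsProperEmbedding.card_le {e L₀ l₀ n : ℕ} (hL₀ : L₀ ≠ 0) (hl₀ : l₀ ≠ 0)
    {x : Fin (e + 1) → ℤ} (hx : ∀ i, ((l₀ ^ n * L₀ : ℕ) : ℤ) ∣ x i) :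
    Nat.card {T : {m : List (Fin 2) // m.length ≤ n} → (Fin (e + 1) → ℤ) //
        IsProperEmbedding (e + 1) L₀ l₀ n x T} ≤
      (2 * (e + 1) * (4 * l₀ + 1) ^ e) ^ (2 * 2 ^ n) := by
  have : Finite {m : List (Fin 2) // m.length < n} := (List.finite_length_lt _ n).to_subtype
  have := Fintype.ofFinite {m : List (Fin 2) // m.length < n}
  let Edge := {m : List (Fin 2) // m.length < n} × Fin 2
  let S : Edge → Set (Fin (e + 1) → ℤ) := fun p =>
    latticeSphere (e + 1) (l₀ ^ (n - p.1.1.length - 1) * L₀) ((p.2 + 1) * l₀)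
  have hS_ne : ∀ p : Edge, l₀ ^ (n - p.1.1.length - 1) * L₀ ≠ 0 := fun _ => by positivity
  have : ∀ p, Finite (S p) := fun p => (finite_latticeSphere e (hS_ne p) _).to_subtype
  let increments (T : {T // IsProperEmbedding (e + 1) L₀ l₀ n x T}) (p : Edge) : S p :=
    ⟨_, T.2.sub_mem_latticeSphere hx p.1.1 p.1.2 p.2⟩
  have h_inj : Function.Injective increments := fun T T' h =>
    Subtype.ext <| eq_of_apply_nil_eq_of_sub_eq (T.2.1.trans T'.2.1.symm)
      fun m hm j => congrArg Subtype.val (congrFun h (⟨m, hm⟩, j))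
  have h_factor : ∀ p, Nat.card (S p) ≤ 2 * (e + 1) * (4 * l₀ + 1) ^ e := fun p => by
    refine (ncard_latticeSphere_le e (hS_ne p) _).trans ?_
    have : (p.2 : ℕ) + 1 ≤ 2 := p.2.2
    exact Nat.mul_le_mul_left _ (Nat.pow_le_pow_left (by nlinarith) e)
  have h_edges : Nat.card Edge ≤ 2 * 2 ^ n := by
    have := card_lists_length_lt_add_one n
    rw [Nat.card_prod, Nat.card_eq_fintype_card (α := Fin 2), Fintype.card_fin]
    omega
  calc Nat.card {T // IsProperEmbedding (e + 1) L₀ l₀ n x T}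
      ≤ Nat.card (∀ p, S p) := Nat.card_le_card_of_injective _ h_inj
    _ = ∏ p, Nat.card (S p) := Nat.card_pi
    _ ≤ ∏ _p : Edge, 2 * (e + 1) * (4 * l₀ + 1) ^ e := prod_le_prod' fun p _ => h_factor p
    _ = (2 * (e + 1) * (4 * l₀ + 1) ^ e) ^ Nat.card Edge := by
      rw [prod_const, card_univ, Nat.card_eq_fintype_card]
    _ ≤ _ := Nat.pow_le_pow_right (by positivity) h_edges

lemma two_mul_succ_mul_pow_le_pow {e : ℕ} (he : 1 ≤ e) {l : ℕ} (hl : 1 ≤ l) :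
    2 * (e + 1) * (4 * l + 1) ^ e ≤ (20 * l) ^ e := by
  have h_bernoulli : 1 + e * 3 ≤ 4 ^ e :=
    one_add_mul_le_pow_of_sq_nonneg (Nat.zero_le _) (Nat.zero_le _) (Nat.zero_le _) e
  calc 2 * (e + 1) * (4 * l + 1) ^ e ≤ 4 ^ e * (5 * l) ^ e := by
        gcongr
        · omega
        · omega
    _ = (20 * l) ^ e := by rw [← mul_pow, ← mul_assoc]; norm_num

/-- Combinatorial complexity bound (3.5): there is a universal constant `c ≥ 1` such that
the number of proper embeddings of `T_n` in `ℤ^d` with root at `x` is at most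
`(c l₀)^{2(d-1)2^n}`. -/
theorem stmt12 : ∃ c : ℝ, 1 ≤ c ∧ ∀ (d L₀ l₀ n : ℕ), 3 ≤ d → 1 ≤ L₀ → 1 ≤ l₀ →
    ∀ x : Fin d → ℤ, (∀ i, ((l₀ ^ n * L₀ : ℕ) : ℤ) ∣ x i) →
    (Nat.card {T : {m : List (Fin 2) // m.length ≤ n} → (Fin d → ℤ) //
        IsProperEmbedding d L₀ l₀ n x T} : ℝ) ≤ (c * l₀) ^ (2 * (d - 1) * 2 ^ n) := by
  refine ⟨20, by norm_num, fun d L₀ l₀ n hd hL₀ hl₀ x hx => ?_⟩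
  obtain ⟨e, rfl⟩ : ∃ e, d = e + 1 := ⟨d - 1, by omega⟩
  have h_card := (IsProperEmbedding.card_le (by omega) (by omega) hx).trans
    (Nat.pow_le_pow_left (two_mul_succ_mul_pow_le_pow (by omega) hl₀) (2 * 2 ^ n))
  rw [← pow_mul, mul_left_comm, ← mul_assoc] at h_card
  rw [Nat.add_sub_cancel]
  exact_mod_cast h_card
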